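/- Let θ ∈ (0,1) and λ ∈ (0,1]. For every g ∈ ℝ, |Ψ(g) − (1−λ)·g| ≤ g²/8. Equivalently, writing Ψ(g) = (1−λ)·g + r(g), the remainder satisfies the global bound |r(g)| ≤ g²/8, so the one-block gap update g_{n+1} = Ψ(g_n) + ε_{n+1} linearizes to g_{n+1} = (1−λ)·g_n + r(g_n) + ε_{n+1} with |r(g_n)| ≤ g_n²/8. -/

import Mathlib

/-!
`L(t) = log (1 - λ + λ eᵗ)` is the cumulant generating function of a Bernoulli(λ) variable, and
`Ψ(g) - (1 - λ) g = (L(-(1 - θ) g) + λ (1 - θ) g) - (L(θ g) - λ θ g)`.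
Each bracket `L(t) - λ t` lies in `[0, t² / 8]`: the lower bound is Jensen's inequality, the upper
bound is Hoeffding's lemma for a variable with values in `[0, 1]`. As `θ² ≤ 1` and `(1 - θ)² ≤ 1`,
the difference of the two brackets is at most `g² / 8` in absolute value.
-/

open Real

/-- One-block pre-arbitrage gap update map of the partially active AMM built on
a G3M with weights `(θ, 1-θ)`. -/
noncomputable def Psi (θ lam g : ℝ) : ℝ :=
  g - Real.log (1 - lam + lam * Real.exp (θ * g))
    + Real.log (1 - lam + lam * Real.exp (-(1 - θ) * g))

open ProbabilityTheory MeasureTheory unitInterval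

lemma ae_bernoulliMeasure_one_zero_mem_Icc (p : I) :
    ∀ᵐ x ∂Ber((1 : ℝ), 0, p), x ∈ Set.Icc (0 : ℝ) 1 :=
  ae_iff.mpr <| bernoulliMeasure_apply_of_notMem_of_notMem p
    measurableSet_Icc.compl (by simp) (by simp)

lemma mgf_sub_integral_bernoulliMeasure (p : I) (t : ℝ) :
    mgf (fun x => x - ∫ y, y ∂Ber((1 : ℝ), 0, p)) Ber((1 : ℝ), 0, p) t
      = exp (-(p * t)) * (1 - p + p * exp t) := by
  have h1 : t * (1 - (p * 1 + (1 - p) * 0)) = -(p * t) + t := by ring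
  have h0 : t * (0 - (p * 1 + (1 - p) * 0)) = -(p * t) := by ring
  simp only [mgf, integral_bernoulliMeasure, smul_eq_mul]
  rw [h1, h0, exp_add]
  ring

section BernoulliCGF

variable {s : ℝ} (hs0 : 0 ≤ s) (hs1 : s ≤ 1)
include hs0 hs1

lemma exp_mul_le_one_sub_add_mul_exp (t : ℝ) : exp (s * t) ≤ 1 - s + s * exp t := by
  simpa using convexOn_exp.2 (Set.mem_univ 0) (Set.mem_univ t) (sub_nonneg.2 hs1) hs0 (by ring)

lemma one_sub_add_mul_exp_pos (t : ℝ) : 0 < 1 - s + s * exp t :=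
  (exp_pos _).trans_le (exp_mul_le_one_sub_add_mul_exp hs0 hs1 t)

lemma mul_le_log_one_sub_add_mul_exp (t : ℝ) : s * t ≤ log (1 - s + s * exp t) :=
  (le_log_iff_exp_le (one_sub_add_mul_exp_pos hs0 hs1 t)).2
    (exp_mul_le_one_sub_add_mul_exp hs0 hs1 t)

lemma log_one_sub_add_mul_exp_le (t : ℝ) : log (1 - s + s * exp t) ≤ s * t + t ^ 2 / 8 := by
  have hoeffding := (hasSubgaussianMGF_of_mem_Icc (X := fun x => x) aemeasurable_id
    (ae_bernoulliMeasure_one_zero_mem_Icc ⟨s, hs0, hs1⟩)).mgf_le t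
  have hparam : (((‖(1 : ℝ) - 0‖₊ / 2) ^ 2 : NNReal) : ℝ) * t ^ 2 / 2 = t ^ 2 / 8 := by
    norm_num; ring
  rw [mgf_sub_integral_bernoulliMeasure, hparam] at hoeffding
  rw [log_le_iff_le_exp (one_sub_add_mul_exp_pos hs0 hs1 t), exp_add]
  calc 1 - s + s * exp t = exp (s * t) * (exp (-(s * t)) * (1 - s + s * exp t)) := by
        rw [← mul_assoc, ← exp_add, add_neg_cancel, exp_zero, one_mul]
    _ ≤ exp (s * t) * exp (t ^ 2 / 8) := by gcongr

end BernoulliCGF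

theorem stmt4 (θ lam : ℝ) (hθ : θ ∈ Set.Ioo (0:ℝ) 1) (hlam : lam ∈ Set.Ioc (0:ℝ) 1) :
    ∀ g : ℝ, |Psi θ lam g - (1 - lam) * g| ≤ g ^ 2 / 8 := by
  intro g
  obtain ⟨hlam0, hlam1⟩ := hlam
  have hsplit : Psi θ lam g - (1 - lam) * g =
      (log (1 - lam + lam * exp (-(1 - θ) * g)) - lam * (-(1 - θ) * g)) -
        (log (1 - lam + lam * exp (θ * g)) - lam * (θ * g)) := by
    rw [Psi]; ring
  have l₁ := mul_le_log_one_sub_add_mul_exp hlam0.le hlam1 (θ * g)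
  have l₂ := mul_le_log_one_sub_add_mul_exp hlam0.le hlam1 (-(1 - θ) * g)
  have u₁ := log_one_sub_add_mul_exp_le hlam0.le hlam1 (θ * g)
  have u₂ := log_one_sub_add_mul_exp_le hlam0.le hlam1 (-(1 - θ) * g)
  have hθg : (θ * g) ^ 2 ≤ g ^ 2 ∧ (-(1 - θ) * g) ^ 2 ≤ g ^ 2 := by
    obtain ⟨hθ0, hθ1⟩ := hθ
    constructor <;> nlinarith [sq_nonneg g]
  rw [hsplit, abs_le]
  constructor <;> linarith [hθg.1, hθg.2]
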